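/- arXiv:2010.04219 — 2 statements merged into one kernel-verified Lean document; each statement's English description precedes it below -/
import Mathlib

section
/- Fix u > 0 and |x| < 2, and let m₊(x) = x/2 − i√(4−x²)/2. Then 1 − u² m₊(x)² = 1 + u² − u²x²/2 + i u² x √(4−x²)/2, and the derivative in x of arg(1 − u² m₊(x)²) equals (2u⁴ + 2u² − u²x²) / (√(4−x²)(−u²x² + u⁴ + 2u² + 1)). -/
open Complex

/-- Boundary value from above of the semicircle Stieltjes transform, for `|x| < 2`. -/
noncomputable def mPlus (x : ℝ) : ℂ := (x : ℂ) / 2 - Complex.I * (Real.sqrt (4 - x ^ 2) : ℝ) / 2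

/-! Writing `s = √(4 - x²)`, the map `m₊` solves `m₊' = i m₊ / s`, so `f = 1 - u² m₊²` has
`f' = -2 i u² m₊² / s`, and `m₊² = x²/2 - 1 - i x s / 2`. Off the negative real axis `arg = Im ∘ log`,
hence `(arg ∘ f)' = Im (f' / f)`, and `|f|² = (1 + u²)² - u² x²`. The value `f(x)` never lies on the
closed negative real axis: `Re f ≤ 0` forces `u x ≠ 0`, and then `Im f = u² x s / 2 ≠ 0`. -/

theorem HasDerivAt.carg_real {f : ℝ → ℂ} {f' : ℂ} {x : ℝ} (hf : HasDerivAt f f' x)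
    (hx : f x ∈ slitPlane) : HasDerivAt (fun y => arg (f y)) (f' / f x).im x := by
  simpa only [Function.comp_def, imCLM_apply, log_im] using
    imCLM.hasFDerivAt.comp_hasDerivAt x (hf.clog_real hx)

theorem Real.hasDerivAt_sqrt_sub_sq {a x : ℝ} (hx : x ^ 2 < a) :
    HasDerivAt (fun y => √(a - y ^ 2)) (-x / √(a - x ^ 2)) x := by
  have hs : √(a - x ^ 2) ≠ 0 := (Real.sqrt_pos.mpr (by linarith)).ne'
  convert ((hasDerivAt_pow 2 x).const_sub a).sqrt (by linarith) using 1
  field_simp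
  ring

section mPlus

variable {x : ℝ}

theorem mPlus_sq (hx : x ^ 2 ≤ 4) :
    mPlus x ^ 2 = ((x ^ 2 / 2 - 1 : ℝ) : ℂ) - I * ((x * √(4 - x ^ 2) / 2 : ℝ) : ℂ) := by
  have hs : ((√(4 - x ^ 2) : ℝ) : ℂ) ^ 2 = 4 - (x : ℂ) ^ 2 := by
    rw [← ofReal_pow, Real.sq_sqrt (by linarith)]
    push_cast
    ring
  rw [mPlus]
  push_cast
  linear_combination (-1 / 4 : ℂ) * hs + ((√(4 - x ^ 2) : ℝ) : ℂ) ^ 2 / 4 * I_sq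

theorem hasDerivAt_mPlus (hx : x ^ 2 < 4) :
    HasDerivAt mPlus (I * mPlus x / √(4 - x ^ 2)) x := by
  have hs : ((√(4 - x ^ 2) : ℝ) : ℂ) ≠ 0 :=
    ofReal_ne_zero.mpr (Real.sqrt_pos.mpr (by linarith)).ne'
  have h := (hasDerivAt_id x).ofReal_comp.div_const 2 |>.sub
    (((Real.hasDerivAt_sqrt_sub_sq hx).ofReal_comp.const_mul I).div_const 2)
  refine h.congr_deriv ?_
  rw [mPlus]
  push_cast
  field_simp
  linear_combination ((√(4 - x ^ 2) : ℝ) : ℂ) * I_sq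

end mPlus

section SpectralFactor

variable (u : ℝ) {x : ℝ}

theorem one_sub_sq_mul_mPlus_sq (hx : x ^ 2 ≤ 4) :
    1 - (u : ℂ) ^ 2 * mPlus x ^ 2
      = ((1 + u ^ 2 - u ^ 2 * x ^ 2 / 2 : ℝ) : ℂ)
          + I * ((u ^ 2 * x * √(4 - x ^ 2) / 2 : ℝ) : ℂ) := by
  rw [mPlus_sq hx]
  push_cast
  ring

theorem normSq_one_sub_sq_mul_mPlus_sq (hx : x ^ 2 ≤ 4) :
    normSq (1 - (u : ℂ) ^ 2 * mPlus x ^ 2) = -(u ^ 2 * x ^ 2) + u ^ 4 + 2 * u ^ 2 + 1 := by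
  rw [one_sub_sq_mul_mPlus_sq u hx, mul_comm I, normSq_add_mul_I]
  linear_combination (u ^ 4 * x ^ 2 / 4) * Real.sq_sqrt (by linarith : 0 ≤ 4 - x ^ 2)

theorem one_sub_sq_mul_mPlus_sq_mem_slitPlane (hx : x ^ 2 < 4) :
    1 - (u : ℂ) ^ 2 * mPlus x ^ 2 ∈ slitPlane := by
  have hs : 0 < √(4 - x ^ 2) := Real.sqrt_pos.mpr (by linarith)
  rw [mem_slitPlane_iff, one_sub_sq_mul_mPlus_sq u hx.le]
  simp only [add_re, add_im, ofReal_re, ofReal_im, mul_re, mul_im, I_re, I_im]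
  rw [or_iff_not_imp_left, not_lt]
  intro hre
  have hu : u ≠ 0 := by
    rintro rfl
    norm_num at hre
  have hx0 : x ≠ 0 := by
    rintro rfl
    nlinarith
  simp [hu, hx0, hs.ne']

theorem hasDerivAt_one_sub_sq_mul_mPlus_sq (hx : x ^ 2 < 4) :
    HasDerivAt (fun y => 1 - (u : ℂ) ^ 2 * mPlus y ^ 2)
      (((-(u ^ 2 * x) : ℝ) : ℂ) + I * ((u ^ 2 * (2 - x ^ 2) / √(4 - x ^ 2) : ℝ) : ℂ)) x := by
  have hs : ((√(4 - x ^ 2) : ℝ) : ℂ) ≠ 0 :=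
    ofReal_ne_zero.mpr (Real.sqrt_pos.mpr (by linarith)).ne'
  refine ((((hasDerivAt_mPlus hx).fun_pow 2).const_mul ((u : ℂ) ^ 2)).const_sub 1).congr_deriv ?_
  trans -2 * I * (u : ℂ) ^ 2 * mPlus x ^ 2 / √(4 - x ^ 2)
  · push_cast
    ring
  rw [mPlus_sq hx.le]
  push_cast
  field_simp
  linear_combination (u : ℂ) ^ 2 * x * √(4 - x ^ 2) * I_sq

theorem hasDerivAt_arg_one_sub_sq_mul_mPlus_sq (hx : x ^ 2 < 4) :
    HasDerivAt (fun y => arg (1 - (u : ℂ) ^ 2 * mPlus y ^ 2))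
      ((2 * u ^ 4 + 2 * u ^ 2 - u ^ 2 * x ^ 2)
        / (√(4 - x ^ 2) * (-(u ^ 2 * x ^ 2) + u ^ 4 + 2 * u ^ 2 + 1))) x := by
  have hmem := one_sub_sq_mul_mPlus_sq_mem_slitPlane u hx
  refine ((hasDerivAt_one_sub_sq_mul_mPlus_sq u hx).carg_real hmem).congr_deriv ?_
  have hs : 0 < √(4 - x ^ 2) := Real.sqrt_pos.mpr (by linarith)
  have hD := normSq_one_sub_sq_mul_mPlus_sq u hx.le ▸ normSq_pos.mpr (slitPlane_ne_zero hmem)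
  rw [div_im, normSq_one_sub_sq_mul_mPlus_sq u hx.le, one_sub_sq_mul_mPlus_sq u hx.le]
  simp only [add_re, add_im, ofReal_re, ofReal_im, mul_re, mul_im, I_re, I_im, zero_mul, mul_zero,
    one_mul, zero_add, sub_zero, add_zero]
  rw [div_sub_div_same, div_eq_div_iff hD.ne' (by positivity)]
  field_simp
  linear_combination u ^ 4 * x ^ 2 * (-(u ^ 2 * x ^ 2) + u ^ 4 + 2 * u ^ 2 + 1)
    * Real.sq_sqrt (by linarith : 0 ≤ 4 - x ^ 2)

end SpectralFactor

theorem stmt_10_general (u x : ℝ) (hx : |x| < 2) :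
    1 - (u : ℂ) ^ 2 * (mPlus x) ^ 2
        = 1 + (u ^ 2 : ℝ) - ((u ^ 2 * x ^ 2 / 2 : ℝ) : ℂ)
            + Complex.I * ((u ^ 2 * x * Real.sqrt (4 - x ^ 2) / 2 : ℝ) : ℂ) ∧
      deriv (fun y : ℝ => Complex.arg (1 - (u : ℂ) ^ 2 * (mPlus y) ^ 2)) x
        = (2 * u ^ 4 + 2 * u ^ 2 - u ^ 2 * x ^ 2)
            / (Real.sqrt (4 - x ^ 2) * (-(u ^ 2 * x ^ 2) + u ^ 4 + 2 * u ^ 2 + 1)) := by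
  have hx2 : x ^ 2 < 4 := by nlinarith [abs_lt.mp hx, sq_abs x]
  refine ⟨by rw [one_sub_sq_mul_mPlus_sq u hx2.le]; push_cast; ring, ?_⟩
  exact (hasDerivAt_arg_one_sub_sq_mul_mPlus_sq u hx2).deriv

theorem stmt_10 (u x : ℝ) (hu : 0 < u) (hx : |x| < 2) :
    1 - (u : ℂ) ^ 2 * (mPlus x) ^ 2
        = 1 + (u ^ 2 : ℝ) - ((u ^ 2 * x ^ 2 / 2 : ℝ) : ℂ)
            + Complex.I * ((u ^ 2 * x * Real.sqrt (4 - x ^ 2) / 2 : ℝ) : ℂ) ∧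
      deriv (fun y : ℝ => Complex.arg (1 - (u : ℂ) ^ 2 * (mPlus y) ^ 2)) x
        = (2 * u ^ 4 + 2 * u ^ 2 - u ^ 2 * x ^ 2)
            / (Real.sqrt (4 - x ^ 2) * (-(u ^ 2 * x ^ 2) + u ^ 4 + 2 * u ^ 2 + 1)) :=
  stmt_10_general u x hx
end

section
/- Let 0 < u ≤ 1 and η > 0, and define q(v) = −u²v⁴ − (1 − u²)v³ + (5 + u²)v² − (u² + 4η² + 7)v + 3. Then q is strictly decreasing on [0,1], q(0) = 3 > 0, q(1) = −4η² < 0, and hence q has exactly one root in (0,1). -/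
/-!
Dividing `q'(v) + 4η²` by `v - 1` gives
`q'(v) = -4η² - 4(1 - u²)(1 - v) - (1 - v)²(3 + 5u² + 4u²v)`,
which is at most `-4η² < 0` on `[0, 1]` once `u² ≤ 1`. So `q` is strictly decreasing there,
and as it changes sign between the endpoints it has exactly one root in `(0, 1)`.
-/

open Set

theorem existsUnique_mem_Ioo_eq_zero_of_strictAntiOn {f : ℝ → ℝ} {a b : ℝ} (hab : a ≤ b)
    (hf : ContinuousOn f (Icc a b)) (hanti : StrictAntiOn f (Icc a b))
    (ha : 0 < f a) (hb : f b < 0) : ∃! x, x ∈ Ioo a b ∧ f x = 0 := by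
  obtain ⟨x, hx, hfx⟩ := intermediate_value_Ioo' hab hf ⟨hb, ha⟩
  refine ⟨x, ⟨hx, hfx⟩, fun y ⟨hy, hfy⟩ => ?_⟩
  exact hanti.injOn (Ioo_subset_Icc_self hy) (Ioo_subset_Icc_self hx) (hfy.trans hfx.symm)

noncomputable def quartic (u η v : ℝ) : ℝ :=
  -u ^ 2 * v ^ 4 - (1 - u ^ 2) * v ^ 3 + (5 + u ^ 2) * v ^ 2 - (u ^ 2 + 4 * η ^ 2 + 7) * v + 3

theorem continuous_quartic (u η : ℝ) : Continuous (quartic u η) := by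
  unfold quartic
  fun_prop

theorem hasDerivAt_quartic (u η v : ℝ) :
    HasDerivAt (quartic u η)
      (-4 * η ^ 2 - 4 * (1 - u ^ 2) * (1 - v) - (1 - v) ^ 2 * (3 + 5 * u ^ 2 + 4 * u ^ 2 * v)) v := by
  have h := (((((hasDerivAt_pow 4 v).const_mul (-u ^ 2)).sub
    ((hasDerivAt_pow 3 v).const_mul (1 - u ^ 2))).add
    ((hasDerivAt_pow 2 v).const_mul (5 + u ^ 2))).sub
    ((hasDerivAt_id v).const_mul (u ^ 2 + 4 * η ^ 2 + 7))).add_const 3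
  exact h.congr_deriv (by push_cast; ring)

theorem strictAntiOn_quartic {u η : ℝ} (hu : u ^ 2 ≤ 1) (hη : η ≠ 0) :
    StrictAntiOn (quartic u η) (Icc 0 1) := by
  refine strictAntiOn_of_deriv_neg (convex_Icc 0 1)
    (continuous_quartic u η).continuousOn fun v hv => ?_
  obtain ⟨hv0, hv1⟩ : v ∈ Ioo 0 1 := by rwa [interior_Icc] at hv
  rw [(hasDerivAt_quartic u η v).deriv]
  have hη2 : 0 < η ^ 2 := by positivity
  have h1 : 0 ≤ 4 * (1 - u ^ 2) * (1 - v) := mul_nonneg (by linarith) (by linarith)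
  have h2 : 0 ≤ (1 - v) ^ 2 * (3 + 5 * u ^ 2 + 4 * u ^ 2 * v) := by positivity
  linarith

theorem stmt_15 (u η : ℝ) (hu : 0 < u) (hu1 : u ≤ 1) (hη : 0 < η) :
    StrictAntiOn
        (fun v : ℝ => -u ^ 2 * v ^ 4 - (1 - u ^ 2) * v ^ 3 + (5 + u ^ 2) * v ^ 2
          - (u ^ 2 + 4 * η ^ 2 + 7) * v + 3)
        (Set.Icc 0 1) ∧
      (-u ^ 2 * (0:ℝ) ^ 4 - (1 - u ^ 2) * (0:ℝ) ^ 3 + (5 + u ^ 2) * (0:ℝ) ^ 2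
          - (u ^ 2 + 4 * η ^ 2 + 7) * 0 + 3 = 3) ∧
      (-u ^ 2 * (1:ℝ) ^ 4 - (1 - u ^ 2) * (1:ℝ) ^ 3 + (5 + u ^ 2) * (1:ℝ) ^ 2
          - (u ^ 2 + 4 * η ^ 2 + 7) * 1 + 3 = -4 * η ^ 2) ∧
      (∃! v : ℝ, v ∈ Set.Ioo (0:ℝ) 1 ∧
        -u ^ 2 * v ^ 4 - (1 - u ^ 2) * v ^ 3 + (5 + u ^ 2) * v ^ 2
          - (u ^ 2 + 4 * η ^ 2 + 7) * v + 3 = 0) := by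
  have hanti : StrictAntiOn (quartic u η) (Icc 0 1) :=
    strictAntiOn_quartic (pow_le_one₀ hu.le hu1) hη.ne'
  have hq0 : quartic u η 0 = 3 := by unfold quartic; ring
  have hq1 : quartic u η 1 = -4 * η ^ 2 := by unfold quartic; ring
  refine ⟨hanti, hq0, hq1, ?_⟩
  have hneg : quartic u η 1 < 0 := by rw [hq1]; nlinarith
  exact existsUnique_mem_Ioo_eq_zero_of_strictAntiOn zero_le_one
    (continuous_quartic u η).continuousOn hanti (by linarith) hneg
end
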